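/- Let G be a group in 𝒞_D, and suppose ({B_{n,m}}_n, f_m) ∈ G for every m ≥ 1. Then the family of matrix sequences ({B_{n,m}}_n)_m is Cauchy with respect to the pseudometric d_acs if and only if the sequence of functions (f_m)_m is Cauchy with respect to the metric d_m. -/

import Mathlib

open MeasureTheory Filter
open scoped ENNReal NNReal

/-- The singular values of a complex square matrix, arranged in non-increasing order:
`sv A 0 = σ₁(A) ≥ sv A 1 = σ₂(A) ≥ …` (the square roots of the eigenvalues of `Aᴴ * A`). -/
noncomputable def sv {n : ℕ} (A : Matrix (Fin n) (Fin n) ℂ) : Fin n → ℝ :=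
  fun i =>
    (fun j => Real.sqrt ((Matrix.isHermitian_conjTranspose_mul_self A).eigenvalues j))
      (Tuple.sort (fun j => Real.sqrt ((Matrix.isHermitian_conjTranspose_mul_self A).eigenvalues j))
        i.rev)

/-- `p(A) := min_{1 ≤ i ≤ n} ((i-1)/n + σᵢ(A))` (here `i : Fin n` plays the role of `i-1`). -/
noncomputable def pA {n : ℕ} (A : Matrix (Fin n) (Fin n) ℂ) : ℝ :=
  ⨅ i : Fin n, (((i : ℕ) : ℝ) / n + sv A i)

/-- `ρ({A_n}) := limsup_{n→∞} p(A_n)`, valued in `[0,∞]`. -/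
noncomputable def rho (A : (n : ℕ) → Matrix (Fin n) (Fin n) ℂ) : ℝ≥0∞ :=
  Filter.limsup (fun n => ENNReal.ofReal (pA (A n))) Filter.atTop

/-- The a.c.s. pseudometric `d_acs({A_n},{B_n}) := ρ({A_n − B_n})`. -/
noncomputable def dacs (A B : (n : ℕ) → Matrix (Fin n) (Fin n) ℂ) : ℝ≥0∞ :=
  rho (fun n => A n - B n)

/-- `{A_n} ∼_σ k` : the sequence `{A_n}` has spectral (singular value) symbol `k` on `D`. -/
def SpecSymb {d : ℕ} (D : Set (Fin d → ℝ)) (A : (n : ℕ) → Matrix (Fin n) (Fin n) ℂ)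
    (k : (Fin d → ℝ) → ℂ) : Prop :=
  ∀ F : ℝ → ℂ, Continuous F → HasCompactSupport F →
    Filter.Tendsto (fun n : ℕ => (n : ℂ)⁻¹ * ∑ i : Fin n, F (sv (A n) i)) Filter.atTop
      (nhds ((volume D).toReal⁻¹ • ∫ x in D, F ‖k x‖))

/-- `p_m(f) := inf_{E ⊆ D measurable} ( |D∖E|/|D| + esssup_{x∈E} |f(x)| )`, valued in `[0,∞]`. -/
noncomputable def pm {d : ℕ} (D : Set (Fin d → ℝ)) (f : (Fin d → ℝ) → ℂ) : ℝ≥0∞ :=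
  ⨅ (E : Set (Fin d → ℝ)) (_ : MeasurableSet E) (_ : E ⊆ D),
    (volume (D \ E) / volume D + essSup (fun x => (‖f x‖₊ : ℝ≥0∞)) (volume.restrict E))

/-- `d_m(f,g) := p_m(f − g)`. -/
noncomputable def dm {d : ℕ} (D : Set (Fin d → ℝ)) (f g : (Fin d → ℝ) → ℂ) : ℝ≥0∞ :=
  pm D (fun x => f x - g x)

/-- A "group in 𝒞_D": a set `G` of pairs `({A_n}, k)` with `k` measurable and `{A_n} ∼_σ k`,
closed under addition and negation. -/
def IsGroupIn {d : ℕ} (D : Set (Fin d → ℝ))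
    (G : Set (((n : ℕ) → Matrix (Fin n) (Fin n) ℂ) × ((Fin d → ℝ) → ℂ))) : Prop :=
  (∀ p ∈ G, Measurable p.2 ∧ SpecSymb D p.1 p.2) ∧
  (∀ p ∈ G, ∀ q ∈ G, ((fun n => p.1 n + q.1 n), p.2 + q.2) ∈ G) ∧
  (∀ p ∈ G, ((fun n => -(p.1 n)), -p.2) ∈ G)

/-!
Applied to `({B_{n,s} - B_{n,t}}, f_s - f_t) ∈ G`, it suffices to compare `ρ({C_n})` with
`p_m(h)` for a single pair `{C_n} ∼_σ h`. Both are infima of the same shape: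
`p_m(h) = inf_t (|D ∖ {|h| ≤ t}| / |D| + t)`, while `p(A)` is, up to the choice of thresholds,
`inf_c (#{j | σ_j ≥ c} / n + c)`. The symbol relation says that the empirical distribution of the
singular values converges weakly to the distribution of `|h|` on `D`; testing it against continuous
cutoffs that are `1` below one threshold and `0` above a larger one transfers the two infima into
each other, giving `ρ ≤ r` when `p_m(h) < r ≤ 1` and `p_m(h) ≤ 3r` when `ρ < r`.
-/

open Finset

lemma sv_nonneg {n : ℕ} (A : Matrix (Fin n) (Fin n) ℂ) (i : Fin n) : 0 ≤ sv A i :=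
  Real.sqrt_nonneg _

lemma sv_antitone {n : ℕ} (A : Matrix (Fin n) (Fin n) ℂ) : Antitone (sv A) :=
  fun _ _ hij => Tuple.monotone_sort
    (fun j => √((Matrix.isHermitian_conjTranspose_mul_self A).eigenvalues j)) (Fin.rev_le_rev.2 hij)

lemma pA_le {n : ℕ} (A : Matrix (Fin n) (Fin n) ℂ) (i : Fin n) :
    pA A ≤ (i : ℕ) / n + sv A i :=
  ciInf_le ⟨0, by rintro _ ⟨j, rfl⟩; exact add_nonneg (by positivity) (sv_nonneg A j)⟩ i

lemma one_sub_mul_lt_card_sv_le_of_pA_lt {n : ℕ} (hn : 0 < n) (A : Matrix (Fin n) (Fin n) ℂ)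
    {r : ℝ} (hA : pA A < r) : (1 - r) * n < #{j | sv A j ≤ r} := by
  have : Nonempty (Fin n) := ⟨⟨0, hn⟩⟩
  obtain ⟨i, hi⟩ := exists_lt_of_ciInf_lt hA
  have hsv := sv_nonneg A i
  have hi0 : (0 : ℝ) ≤ (i : ℕ) / n := by positivity
  have hin : ((i : ℕ) : ℝ) < r * n := by
    rw [← div_lt_iff₀ (by positivity)]
    linarith
  have hsub : Ici i ⊆ ({j | sv A j ≤ r} : Finset _) := fun j hj => by
    simpa using ((sv_antitone A (mem_Ici.1 hj)).trans (by linarith))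
  calc (1 - r) * n < n - (i : ℕ) := by linarith
    _ = #(Ici i) := by rw [Fin.card_Ici, Nat.cast_sub i.2.le]
    _ ≤ #{j | sv A j ≤ r} := by exact_mod_cast card_le_card hsub

lemma pA_lt_of_one_sub_mul_lt_card_sv_lt {n : ℕ} (A : Matrix (Fin n) (Fin n) ℂ) {s c : ℝ}
    (hs : s ≤ 1) (hA : (1 - s) * n < #{j | sv A j < c}) : pA A < s + c := by
  set k := #{j | c ≤ sv A j}
  have hkn : #{j | sv A j < c} + k = n := by
    simpa [k, not_lt] using card_filter_add_card_filter_not (s := univ) fun j => sv A j < c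
  have hks : (k : ℝ) < s * n := by
    have : ((#{j | sv A j < c} : ℕ) : ℝ) + k = n := by exact_mod_cast hkn
    linarith
  have hk : k < n := by
    have : (k : ℝ) < n := by nlinarith [(Nat.cast_nonneg n : (0 : ℝ) ≤ n)]
    exact_mod_cast this
  have hsvk : sv A ⟨k, hk⟩ < c := by
    by_contra! hck
    have hsub : Iic (⟨k, hk⟩ : Fin n) ⊆ ({j | c ≤ sv A j} : Finset _) := fun j hj => by
      simpa using hck.trans (sv_antitone A (mem_Iic.1 hj))
    have : k + 1 ≤ k := by simpa only [Fin.card_Iic] using card_le_card hsub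
    omega
  have hn : (0 : ℝ) < n := by exact_mod_cast (Nat.zero_le k).trans_lt hk
  calc pA A ≤ (k : ℝ) / n + sv A ⟨k, hk⟩ := pA_le A ⟨k, hk⟩
    _ < s + c := by
      have : (k : ℝ) / n < s := by rwa [div_lt_iff₀ hn]
      linarith

lemma exists_cutoff {a c : ℝ} (hac : a < c) :
    ∃ φ : C(ℝ, ℝ), Set.EqOn φ 1 (Set.Icc 0 a) ∧ Set.EqOn φ 0 (Set.Ici c) ∧
      HasCompactSupport φ ∧ ∀ x, φ x ∈ Set.Icc 0 1 :=
  exists_continuous_one_zero_of_isCompact isCompact_Icc isClosed_Ici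
    ((Set.Iic_disjoint_Ici.2 (not_le.2 hac)).mono_left Set.Icc_subset_Iic_self)

section cutoff
variable {φ : ℝ → ℝ} {a c : ℝ}

lemma card_le_sum_cutoff {ι : Type*} [Fintype ι] {g : ι → ℝ} (hg : ∀ i, 0 ≤ g i)
    (hφ : ∀ x, φ x ∈ Set.Icc 0 1) (hφa : Set.EqOn φ 1 (Set.Icc 0 a)) :
    (#{i | g i ≤ a} : ℝ) ≤ ∑ i, φ (g i) := by
  rw [← sum_boole]
  refine sum_le_sum fun i _ => ?_
  split_ifs with hi
  · exact (hφa ⟨hg i, hi⟩).ge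
  · exact (hφ _).1

lemma sum_cutoff_le_card {ι : Type*} [Fintype ι] (g : ι → ℝ)
    (hφ : ∀ x, φ x ∈ Set.Icc 0 1) (hφc : Set.EqOn φ 0 (Set.Ici c)) :
    ∑ i, φ (g i) ≤ #{i | g i < c} := by
  rw [← sum_boole]
  refine sum_le_sum fun i _ => ?_
  split_ifs with hi
  · exact (hφ _).2
  · exact (hφc (not_lt.1 hi)).le

variable {α : Type*} [MeasurableSpace α] {μ : Measure α} [IsFiniteMeasure μ] {g : α → ℝ}

lemma measureReal_le_integral_cutoff (hg : Measurable g) (hg0 : ∀ x, 0 ≤ g x)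
    (hφm : Measurable φ) (hφ : ∀ x, φ x ∈ Set.Icc 0 1) (hφa : Set.EqOn φ 1 (Set.Icc 0 a)) :
    μ.real {x | g x ≤ a} ≤ ∫ x, φ (g x) ∂μ := by
  have hs : MeasurableSet {x | g x ≤ a} := measurableSet_le hg measurable_const
  rw [← integral_indicator_one hs]
  refine integral_mono ((integrable_const 1).indicator hs)
    (.of_bound (hφm.comp hg).aestronglyMeasurable 1 (ae_of_all _ fun x => ?_)) fun x => ?_
  · rw [Real.norm_of_nonneg (hφ _).1]
    exact (hφ _).2
  · by_cases hx : g x ≤ a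
    · simp [Set.indicator_of_mem (show x ∈ {x | g x ≤ a} from hx), hφa ⟨hg0 x, hx⟩]
    · simp [Set.indicator_of_notMem (show x ∉ {x | g x ≤ a} from hx), (hφ _).1]

lemma integral_cutoff_le_measureReal (hg : Measurable g)
    (hφ : ∀ x, φ x ∈ Set.Icc 0 1) (hφc : Set.EqOn φ 0 (Set.Ici c)) :
    ∫ x, φ (g x) ∂μ ≤ μ.real {x | g x < c} := by
  have hs : MeasurableSet {x | g x < c} := measurableSet_lt hg measurable_const
  rw [← integral_indicator_one hs]
  refine integral_mono_of_nonneg (ae_of_all _ fun x => (hφ _).1)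
    ((integrable_const 1).indicator hs) (ae_of_all _ fun x => ?_)
  by_cases hx : g x < c
  · simp [Set.indicator_of_mem (show x ∈ {x | g x < c} from hx), (hφ _).2]
  · simp [Set.indicator_of_notMem (show x ∉ {x | g x < c} from hx), hφc (not_lt.1 hx)]

end cutoff

lemma toReal_measure_diff_div {α : Type*} [MeasurableSpace α] {μ : Measure α} {s t : Set α}
    (hs0 : μ s ≠ 0) (hs : μ s ≠ ⊤) (ht : MeasurableSet t) :
    (μ (s \ t) / μ s).toReal = 1 - μ.real (t ∩ s) / μ.real s := by
  have hpos : 0 < μ.real s := ENNReal.toReal_pos hs0 hs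
  have hsplit := measureReal_inter_add_sdiff (μ := μ) (s := s) ht hs
  rw [ENNReal.toReal_div, ← measureReal_def, ← measureReal_def, Set.inter_comm]
  field_simp
  linarith

lemma pm_eq_iInf {d : ℕ} {D : Set (Fin d → ℝ)} {h : (Fin d → ℝ) → ℂ} (hD : MeasurableSet D)
    (hh : Measurable h) :
    pm D h = ⨅ t : ℝ≥0∞, volume (D \ {x | ‖h x‖ₑ ≤ t}) / volume D + t := by
  refine le_antisymm (le_iInf fun t => ?_) (le_iInf₂ fun E hE => le_iInf fun hED => ?_)
  · have hS : MeasurableSet (D ∩ {x | ‖h x‖ₑ ≤ t}) :=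
      hD.inter (measurableSet_le hh.enorm measurable_const)
    refine (iInf₂_le _ hS).trans (iInf_le_of_le Set.inter_subset_left ?_)
    rw [Set.sdiff_self_inter]
    gcongr
    exact essSup_le_of_ae_le _ (ae_restrict_of_forall_mem hS fun x hx => hx.2)
  · set t := essSup (fun x => (‖h x‖₊ : ℝ≥0∞)) (volume.restrict E)
    have hnull : volume (E \ {x | ‖h x‖ₑ ≤ t}) = 0 := by
      rw [measure_eq_zero_iff_ae_notMem]
      filter_upwards [(ae_restrict_iff' hE).1
        (ae_le_essSup (f := fun x => (‖h x‖₊ : ℝ≥0∞)))] with x hx hxES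
      exact hxES.2 (hx hxES.1)
    refine iInf_le_of_le t ?_
    gcongr ?_ / _ + _
    calc volume (D \ {x | ‖h x‖ₑ ≤ t})
        ≤ volume (D \ E ∪ E \ {x | ‖h x‖ₑ ≤ t}) :=
          measure_mono fun x hx => by by_cases hxE : x ∈ E <;> simp_all
      _ ≤ volume (D \ E) := by rw [← add_zero (volume (D \ E)), ← hnull]; exact measure_union_le _ _

namespace SpecSymb

variable {d : ℕ} {D : Set (Fin d → ℝ)} {C : (n : ℕ) → Matrix (Fin n) (Fin n) ℂ}
  {h : (Fin d → ℝ) → ℂ}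

lemma tendsto_average (hsymb : SpecSymb D C h) {φ : ℝ → ℝ} (hφ : Continuous φ)
    (hφs : HasCompactSupport φ) :
    Tendsto (fun n : ℕ => (n : ℝ)⁻¹ * ∑ i, φ (sv (C n) i)) atTop
      (nhds ((volume.real D)⁻¹ * ∫ x in D, φ ‖h x‖)) := by
  have hF := (Complex.continuous_re.tendsto _).comp
    (hsymb _ (Complex.continuous_ofReal.comp hφ) (hφs.comp_left Complex.ofReal_zero))
  convert hF using 1
  · ext n
    simp [Complex.mul_re]
  · have : ∫ x in D, ((φ ‖h x‖ : ℝ) : ℂ) = ((∫ x in D, φ ‖h x‖ : ℝ) : ℂ) := integral_ofReal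
    simp only [Function.comp_def, this, Complex.real_smul, ← Complex.ofReal_mul,
      Complex.ofReal_re, measureReal_def]

lemma mul_le_measureReal_norm_lt (hD0 : 0 < volume D) (hDfin : volume D < ⊤)
    (hh : Measurable h) (hsymb : SpecSymb D C h) {a c θ : ℝ} (hac : a < c)
    (hC : ∀ᶠ n in atTop, θ * n ≤ #{j | sv (C n) j ≤ a}) :
    θ * volume.real D ≤ volume.real ({x | ‖h x‖ < c} ∩ D) := by
  have : IsFiniteMeasure (volume.restrict D) := isFiniteMeasure_restrict.2 hDfin.ne
  have hDpos : 0 < volume.real D := ENNReal.toReal_pos hD0.ne' hDfin.ne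
  obtain ⟨φ, hφa, hφc, hφs, hφ⟩ := exists_cutoff hac
  have hlim : θ ≤ (volume.real D)⁻¹ * ∫ x in D, φ ‖h x‖ :=
    ge_of_tendsto (hsymb.tendsto_average φ.continuous hφs) <| by
      filter_upwards [hC, eventually_gt_atTop 0] with n hn hn0
      rw [le_inv_mul_iff₀ (by positivity), mul_comm]
      exact hn.trans (card_le_sum_cutoff (fun i => sv_nonneg _ i) hφ hφa)
  calc θ * volume.real D ≤ ∫ x in D, φ ‖h x‖ := by
        rwa [le_inv_mul_iff₀ hDpos, mul_comm] at hlim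
    _ ≤ (volume.restrict D).real {x | ‖h x‖ < c} :=
        integral_cutoff_le_measureReal hh.norm hφ hφc
    _ = _ := measureReal_restrict_apply (measurableSet_lt hh.norm measurable_const)

lemma eventually_mul_lt_card_sv_lt (hD0 : 0 < volume D) (hDfin : volume D < ⊤)
    (hh : Measurable h) (hsymb : SpecSymb D C h) {a c θ : ℝ} (hac : a < c)
    (hθ : θ * volume.real D < volume.real ({x | ‖h x‖ ≤ a} ∩ D)) :
    ∀ᶠ n in atTop, θ * n < #{j | sv (C n) j < c} := by
  have : IsFiniteMeasure (volume.restrict D) := isFiniteMeasure_restrict.2 hDfin.ne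
  have hDpos : 0 < volume.real D := ENNReal.toReal_pos hD0.ne' hDfin.ne
  obtain ⟨φ, hφa, hφc, hφs, hφ⟩ := exists_cutoff hac
  have hlim : θ < (volume.real D)⁻¹ * ∫ x in D, φ ‖h x‖ := by
    rw [lt_inv_mul_iff₀ hDpos, mul_comm]
    refine hθ.trans_le ?_
    rw [← measureReal_restrict_apply (measurableSet_le hh.norm measurable_const)]
    exact measureReal_le_integral_cutoff hh.norm (fun _ => norm_nonneg _) φ.continuous.measurable
      hφ hφa
  filter_upwards [(hsymb.tendsto_average φ.continuous hφs).eventually (eventually_gt_nhds hlim),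
    eventually_gt_atTop 0] with n hn hn0
  rw [lt_inv_mul_iff₀ (by positivity), mul_comm] at hn
  exact hn.trans_le (sum_cutoff_le_card _ hφ hφc)

lemma pm_le_of_rho_lt (hD : MeasurableSet D) (hD0 : 0 < volume D) (hDfin : volume D < ⊤)
    (hh : Measurable h) (hsymb : SpecSymb D C h) {r : ℝ} (hr : 0 < r)
    (hρ : rho C < ENNReal.ofReal r) : pm D h ≤ ENNReal.ofReal (3 * r) := by
  have hC : ∀ᶠ n in atTop, (1 - r) * n ≤ #{j | sv (C n) j ≤ r} := by
    filter_upwards [eventually_lt_of_limsup_lt hρ, eventually_gt_atTop 0] with n hn hn0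
    exact (one_sub_mul_lt_card_sv_le_of_pA_lt hn0 _ ((ENNReal.ofReal_lt_ofReal_iff hr).1 hn)).le
  have hS : MeasurableSet {x | ‖h x‖ < 2 * r} := measurableSet_lt hh.norm measurable_const
  have htail : volume (D \ {x | ‖h x‖ < 2 * r}) / volume D ≤ ENNReal.ofReal r := by
    have hlow := hsymb.mul_le_measureReal_norm_lt hD0 hDfin hh (by linarith : r < 2 * r) hC
    have hDpos : 0 < volume.real D := ENNReal.toReal_pos hD0.ne' hDfin.ne
    rw [ENNReal.le_ofReal_iff_toReal_le (ENNReal.div_ne_top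
        ((measure_mono Set.sdiff_subset).trans_lt hDfin).ne hD0.ne') hr.le,
      toReal_measure_diff_div hD0.ne' hDfin.ne hS, sub_le_comm, le_div_iff₀ hDpos]
    exact hlow
  calc pm D h ≤ volume (D \ {x | ‖h x‖ₑ ≤ ENNReal.ofReal (2 * r)}) / volume D
        + ENNReal.ofReal (2 * r) := (pm_eq_iInf hD hh).trans_le (iInf_le _ _)
    _ ≤ ENNReal.ofReal r + ENNReal.ofReal (2 * r) := by
        refine add_le_add_left (le_trans (ENNReal.div_le_div_right
          (measure_mono (Set.sdiff_subset_sdiff_right fun x hx => ?_)) _) htail) _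
        simpa [← ofReal_norm] using ENNReal.ofReal_le_ofReal (le_of_lt hx)
    _ = ENNReal.ofReal (3 * r) := by
        rw [← ENNReal.ofReal_add hr.le (by positivity)]
        ring_nf

lemma rho_le_of_pm_lt (hD : MeasurableSet D) (hD0 : 0 < volume D) (hDfin : volume D < ⊤)
    (hh : Measurable h) (hsymb : SpecSymb D C h) {r : ℝ} (hr : r ≤ 1)
    (hpm : pm D h < ENNReal.ofReal r) : rho C ≤ ENNReal.ofReal r := by
  rw [pm_eq_iInf hD hh, iInf_lt_iff] at hpm
  obtain ⟨t, ht⟩ := hpm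
  have htop : t ≠ ⊤ := ne_top_of_lt (le_add_self.trans_lt ht)
  have hS : {x | ‖h x‖ₑ ≤ t} = {x | ‖h x‖ ≤ t.toReal} := by
    ext x
    simp [← ofReal_norm, ENNReal.ofReal_le_iff_le_toReal htop]
  rw [hS] at ht
  set u := volume (D \ {x | ‖h x‖ ≤ t.toReal}) / volume D
  have hu : u ≠ ⊤ := ne_top_of_lt (le_self_add.trans_lt ht)
  have hut : u.toReal + t.toReal < r := by
    rw [← ENNReal.toReal_add hu htop]
    exact ENNReal.toReal_lt_of_lt_ofReal ht
  have hu_eq : u.toReal = 1 - volume.real ({x | ‖h x‖ ≤ t.toReal} ∩ D) / volume.real D :=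
    toReal_measure_diff_div hD0.ne' hDfin.ne (measurableSet_le hh.norm measurable_const)
  have hDpos : 0 < volume.real D := ENNReal.toReal_pos hD0.ne' hDfin.ne
  obtain ⟨δ, hδ, hδr⟩ : ∃ δ > 0, u.toReal + t.toReal + 2 * δ = r :=
    ⟨(r - u.toReal - t.toReal) / 2, by linarith, by ring⟩
  have hθ : (1 - (u.toReal + δ)) * volume.real D
      < volume.real ({x | ‖h x‖ ≤ t.toReal} ∩ D) := by
    rw [← lt_div_iff₀ hDpos]
    linarith
  refine limsup_le_of_le (by isBoundedDefault) ?_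
  filter_upwards [hsymb.eventually_mul_lt_card_sv_lt hD0 hDfin hh (lt_add_of_pos_right _ hδ) hθ]
    with n hn
  have hpA := pA_lt_of_one_sub_mul_lt_card_sv_lt _ (by linarith [t.toReal_nonneg]) hn
  exact ENNReal.ofReal_le_ofReal (by linarith)

end SpecSymb

lemma IsGroupIn.sub_mem {d : ℕ} {D : Set (Fin d → ℝ)}
    {G : Set (((n : ℕ) → Matrix (Fin n) (Fin n) ℂ) × ((Fin d → ℝ) → ℂ))} (hG : IsGroupIn D G)
    {p q : ((n : ℕ) → Matrix (Fin n) (Fin n) ℂ) × ((Fin d → ℝ) → ℂ)} (hp : p ∈ G) (hq : q ∈ G) :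
    ((fun n => p.1 n - q.1 n), fun x => p.2 x - q.2 x) ∈ G := by
  simpa only [sub_eq_add_neg, Pi.add_def, Pi.neg_apply] using hG.2.1 p hp _ (hG.2.2 q hq)

lemma cauchy_of_lt_ofReal_imp_le {u v : ℕ → ℕ → ℝ≥0∞}
    (huv : ∀ s t (r : ℝ), 0 < r → r ≤ 1 → u s t < ENNReal.ofReal r →
      v s t ≤ ENNReal.ofReal (3 * r))
    (hu : ∀ ε : ℝ≥0∞, 0 < ε → ∃ M : ℕ, ∀ s t : ℕ, M ≤ s → M ≤ t → u s t < ε) :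
    ∀ ε : ℝ≥0∞, 0 < ε → ∃ M : ℕ, ∀ s t : ℕ, M ≤ s → M ≤ t → v s t < ε := by
  intro ε hε
  obtain ⟨q, -, hq, hqε⟩ := ENNReal.lt_iff_exists_real_btwn.1 hε
  have hq0 : 0 < q := ENNReal.ofReal_pos.1 hq
  set r := min (q / 3) 1
  have hr : 0 < r := lt_min (by positivity) one_pos
  obtain ⟨M, hM⟩ := hu _ (ENNReal.ofReal_pos.2 hr)
  refine ⟨M, fun s t hs ht => (huv s t r hr (min_le_right _ _) (hM s t hs ht)).trans_lt ?_⟩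
  refine lt_of_le_of_lt (ENNReal.ofReal_le_ofReal ?_) hqε
  linarith [min_le_left (q / 3) 1]

/-- for a group `G` in `𝒞_D` and pairs `({B_{n,m}}_n, f_m) ∈ G`, the family
`({B_{n,m}}_n)_m` is Cauchy for `d_acs` iff `(f_m)_m` is Cauchy for `d_m`. -/
theorem group_cauchy_iff_cauchy {d : ℕ} (D : Set (Fin d → ℝ))
    (hD : MeasurableSet D) (hD0 : 0 < volume D) (hDfin : volume D < ⊤)
    (G : Set (((n : ℕ) → Matrix (Fin n) (Fin n) ℂ) × ((Fin d → ℝ) → ℂ)))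
    (hG : IsGroupIn D G)
    (B : ℕ → (n : ℕ) → Matrix (Fin n) (Fin n) ℂ) (f : ℕ → (Fin d → ℝ) → ℂ)
    (hBf : ∀ m, (B m, f m) ∈ G) :
    (∀ ε : ℝ≥0∞, 0 < ε → ∃ M : ℕ, ∀ s t : ℕ, M ≤ s → M ≤ t → dacs (B s) (B t) < ε) ↔
      (∀ ε : ℝ≥0∞, 0 < ε → ∃ M : ℕ, ∀ s t : ℕ, M ≤ s → M ≤ t → dm D (f s) (f t) < ε) := by
  have hdiff (s t : ℕ) := hG.1 _ (hG.sub_mem (hBf s) (hBf t))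
  constructor
  · refine cauchy_of_lt_ofReal_imp_le fun s t r hr _ hρ => ?_
    exact (hdiff s t).2.pm_le_of_rho_lt hD hD0 hDfin (hdiff s t).1 hr hρ
  · refine cauchy_of_lt_ofReal_imp_le fun s t r hr hr1 hpm => ?_
    refine ((hdiff s t).2.rho_le_of_pm_lt hD hD0 hDfin (hdiff s t).1 hr1 hpm).trans ?_
    exact ENNReal.ofReal_le_ofReal (by linarith)
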